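/- Let p be a prime, let R be a 1-p tree of depth n, and let A ⊆ Γ_n(p) be an Abelian subgroup which belongs to R (i.e. whose orbit tree T_n/A is isomorphic to R as a rooted tree). Then log_p|A| ≤ S(R), where S(R) is the number of solo vertices of R. Moreover, equality holds if and only if A is maximal among the Abelian subgroups of Γ_n(p) that belong to R. -/

import Mathlib

namespace TreeWreath

/-- The infinite iterated (permutational) wreath product `Γ(H)` of a permutation
group `H ⊆ Sym(X)`, realized as the subgroup of permutations of the vertex set
`List X` of the rooted tree (the root is `[]`, the children of `v` are the
`v ++ [x]`) whose local action at every vertex belongs to `H`. -/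
def wreath (X : Type*) (H : Subgroup (Equiv.Perm X)) : Subgroup (Equiv.Perm (List X)) where
  carrier := {g | g [] = [] ∧ ∀ v : List X, ∃ σ ∈ H, ∀ x : X, g (v ++ [x]) = g v ++ [σ x]}
  one_mem' := ⟨rfl, fun _ => ⟨1, one_mem H, fun _ => rfl⟩⟩
  mul_mem' := by
    rintro g h ⟨hg0, hg⟩ ⟨hh0, hh⟩
    refine ⟨by simp [Equiv.Perm.mul_apply, hh0, hg0], fun v => ?_⟩
    obtain ⟨τ, hτH, hτ⟩ := hh v
    obtain ⟨σ, hσH, hσ⟩ := hg (h v)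
    exact ⟨σ * τ, mul_mem hσH hτH, fun x => by
      simp [Equiv.Perm.mul_apply, hτ, hσ]⟩
  inv_mem' := by
    rintro g ⟨hg0, hg⟩
    constructor
    · conv_lhs => rw [← hg0]
      exact Equiv.symm_apply_apply g []
    · intro v
      obtain ⟨σ, hσH, hσ⟩ := hg (g⁻¹ v)
      refine ⟨σ⁻¹, inv_mem hσH, fun x => ?_⟩
      have : g (g⁻¹ v ++ [σ⁻¹ x]) = v ++ [x] := by
        rw [hσ]; simp
      rw [← this]
      exact Equiv.symm_apply_apply g _

theorem length_apply_of_mem_wreath {X : Type*} {H : Subgroup (Equiv.Perm X)}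
    {g : Equiv.Perm (List X)} (hg : g ∈ wreath X H) (v : List X) :
    (g v).length = v.length := by
  induction v using List.reverseRecOn with
  | nil => rw [hg.1]
  | append_singleton v x ih =>
      obtain ⟨σ, _, hσ⟩ := hg.2 v
      rw [hσ]; simp [ih]

/-- The cyclic group `C_p` generated by the cycle `x ↦ x + 1` on `ZMod p`. -/
def cyclic (p : ℕ) : Subgroup (Equiv.Perm (ZMod p)) :=
  Subgroup.zpowers (Equiv.addRight (1 : ZMod p))

/-- The finite iterated wreath product `Γ_n(H)`, realized inside `Γ(H)` as the
subgroup of tree automorphisms whose local action at every vertex of level `≥ n`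
is trivial (so it is canonically the `n`-fold wreath power of `H`, acting on
the tree of depth `n`). -/
def wreathLevel (X : Type*) (H : Subgroup (Equiv.Perm X)) (n : ℕ) :
    Subgroup (Equiv.Perm (List X)) where
  carrier := {g | g ∈ wreath X H ∧
    ∀ v : List X, n ≤ v.length → ∀ x : X, g (v ++ [x]) = g v ++ [x]}
  one_mem' := ⟨one_mem _, fun _ _ _ => rfl⟩
  mul_mem' := by
    rintro g h ⟨hgW, hg⟩ ⟨hhW, hh⟩
    refine ⟨mul_mem hgW hhW, fun v hv x => ?_⟩
    have hlen : n ≤ (h v).length := by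
      rw [length_apply_of_mem_wreath hhW]; exact hv
    simp [Equiv.Perm.mul_apply, hh v hv, hg (h v) hlen]
  inv_mem' := by
    rintro g ⟨hgW, hg⟩
    refine ⟨inv_mem hgW, fun v hv x => ?_⟩
    have hlen : n ≤ (g⁻¹ v).length := by
      rw [length_apply_of_mem_wreath (inv_mem hgW)]; exact hv
    have : g (g⁻¹ v ++ [x]) = v ++ [x] := by
      rw [hg (g⁻¹ v) hlen]; simp
    rw [← this]
    exact Equiv.symm_apply_apply g _

/-- The symmetric `p`-group `Γ_n(p)`: the `n`-fold iterated wreath product of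
`C_p`, i.e. a Sylow `p`-subgroup of `Sym(p^n)`. -/
def GammaLevel (p : ℕ) (n : ℕ) : Subgroup (Equiv.Perm (List (ZMod p))) :=
  wreathLevel (ZMod p) (cyclic p) n


/-! ### Stage 1: basic structure lemmas -/

section Basic

variable {p : ℕ}

local notation "L" => List (ZMod p)
local notation "W" => wreath (ZMod p) (cyclic p)
local notation "Γ" => GammaLevel p

theorem prefix_apply_of_mem_wreath {X : Type*} {H : Subgroup (Equiv.Perm X)}
    {g : Equiv.Perm (List X)} (hg : g ∈ wreath X H) (v u : List X) :
    g v <+: g (v ++ u) := by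
  induction u using List.reverseRecOn with
  | nil => simp
  | append_singleton u x ih =>
      obtain ⟨σ, _, hσ⟩ := hg.2 (v ++ u)
      rw [← List.append_assoc, hσ]
      exact ih.trans (List.prefix_append _ _)

theorem cyclic_apply {σ : Equiv.Perm (ZMod p)} (hσ : σ ∈ cyclic p) (x : ZMod p) :
    σ x = x + σ 0 := by
  obtain ⟨z, rfl⟩ := hσ
  have key : ∀ (z : ℤ) (x : ZMod p), ((Equiv.addRight (1 : ZMod p)) ^ z) x = x + z := by
    intro z
    induction z using Int.induction_on with
    | zero => intro x; simp
    | succ k ih =>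
        intro x
        rw [zpow_add_one]
        simp only [Equiv.Perm.mul_apply]
        rw [show ((Equiv.addRight (1 : ZMod p)) : Equiv.Perm (ZMod p)) x = x + 1 from rfl]
        rw [ih]; push_cast; ring
    | pred k ih =>
        intro x
        rw [zpow_sub_one]
        have : ∀ y : ZMod p, ((Equiv.addRight (1 : ZMod p))⁻¹ : Equiv.Perm (ZMod p)) y = y - 1 := by
          intro y
          apply (Equiv.addRight (1 : ZMod p)).injective
          simp [Equiv.Perm.inv_def]
        simp only [Equiv.Perm.mul_apply, this, ih]
        push_cast; ring
  rw [key, key]; ring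

/-- The root displacement of `g`. -/
def rt (g : Equiv.Perm L) : ZMod p := (g [0]).headI

theorem apply_singleton {g : Equiv.Perm L} (hg : g ∈ W) (x : ZMod p) :
    g [x] = [x + rt g] := by
  obtain ⟨σ, hσc, hσ⟩ := hg.2 []
  have h0 : ∀ y : ZMod p, g [y] = [σ y] := by
    intro y
    have := hσ y
    rwa [List.nil_append, hg.1, List.nil_append] at this
  have hrt : rt g = σ 0 := by
    unfold rt
    rw [h0 0, cyclic_apply hσc 0]
    simp
  rw [h0 x, cyclic_apply hσc x, hrt]

theorem rt_one : rt (1 : Equiv.Perm L) = 0 := rfl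

theorem rt_mul {g h : Equiv.Perm L} (hg : g ∈ W) (hh : h ∈ W) :
    rt (g * h) = rt g + rt h := by
  unfold rt
  rw [Equiv.Perm.mul_apply, show h [(0:ZMod p)] = [0 + rt h] from apply_singleton hh 0,
    apply_singleton hg]
  simp [rt]
  ring

theorem rt_inv {g : Equiv.Perm L} (hg : g ∈ W) : rt g⁻¹ = - rt g := by
  have := rt_mul (inv_mem hg) hg
  rw [inv_mul_cancel] at this
  rw [rt_one] at this
  linear_combination (norm := ring_nf) -this

theorem rt_pow {g : Equiv.Perm L} (hg : g ∈ W) (k : ℕ) :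
    rt (g ^ k) = (k : ZMod p) * rt g := by
  induction k with
  | zero => simp [rt_one]
  | succ k ih =>
      rw [pow_succ, rt_mul (pow_mem hg k) hg, ih]
      push_cast; ring

theorem rt_zpow {g : Equiv.Perm L} (hg : g ∈ W) (s : ℤ) :
    rt (g ^ s) = (s : ZMod p) * rt g := by
  cases s with
  | ofNat k => simpa using rt_pow hg k
  | negSucc k =>
      rw [zpow_negSucc, rt_inv (pow_mem hg (k+1)), rt_pow hg (k+1)]
      push_cast; ring

end Basic

/-! ### Stage 2: restriction and gluing -/

section Res

variable {p : ℕ}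

local notation "L" => List (ZMod p)
local notation "W" => wreath (ZMod p) (cyclic p)
local notation "Γ" => GammaLevel p

/-- The restriction of `g` to the subtree above `[i]` (as a bare function). -/
def resFun (g : Equiv.Perm L) (i : ZMod p) : L → L := fun v => (g (i :: v)).tail

theorem apply_cons {g : Equiv.Perm L} (hg : g ∈ W) (i : ZMod p) (v : L) :
    g (i :: v) = (i + rt g) :: resFun g i v := by
  have hpre : g [i] <+: g ([i] ++ v) := prefix_apply_of_mem_wreath hg [i] v
  rw [apply_singleton hg i] at hpre
  obtain ⟨t, ht⟩ := hpre
  have ht' : g (i :: v) = (i + rt g) :: t := ht.symm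
  rw [ht', resFun, ht']
  rfl

theorem resFun_one (i : ZMod p) (v : L) : resFun 1 i v = v := rfl

theorem resFun_mul {g h : Equiv.Perm L} (hg : g ∈ W) (hh : h ∈ W) (i : ZMod p) (v : L) :
    resFun (g * h) i v = resFun g (i + rt h) (resFun h i v) := by
  have h1 : (g * h) (i :: v) = (i + rt (g * h)) :: resFun (g * h) i v :=
    apply_cons (mul_mem hg hh) i v
  have h2 : (g * h) (i :: v) = (i + rt h + rt g) :: resFun g (i + rt h) (resFun h i v) := by
    rw [Equiv.Perm.mul_apply, apply_cons hh i v, apply_cons hg (i + rt h) (resFun h i v)]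
  rw [h1] at h2
  exact (List.cons.injEq _ _ _ _ ▸ h2).2

theorem resFun_left_inv {g : Equiv.Perm L} (hg : g ∈ W) (i : ZMod p) (v : L) :
    resFun g⁻¹ (i + rt g) (resFun g i v) = v := by
  rw [← resFun_mul (inv_mem hg) hg i v, inv_mul_cancel, resFun_one]

theorem resFun_right_inv {g : Equiv.Perm L} (hg : g ∈ W) (i : ZMod p) (v : L) :
    resFun g (i + rt g + rt g⁻¹) (resFun g⁻¹ (i + rt g) v) = v := by
  rw [← resFun_mul hg (inv_mem hg) (i + rt g) v, mul_inv_cancel, resFun_one]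

open scoped Classical in
/-- The restriction of `g` to the subtree above `[i]`, as a permutation.
Junk value `1` if `g ∉ W`. -/
noncomputable def resPerm (g : Equiv.Perm L) (i : ZMod p) : Equiv.Perm L :=
  if hg : g ∈ W then
    { toFun := resFun g i
      invFun := resFun g⁻¹ (i + rt g)
      left_inv := fun v => resFun_left_inv hg i v
      right_inv := fun v => by
        have := resFun_right_inv hg i v
        rwa [rt_inv hg, add_neg_cancel_right] at this }
  else 1

theorem resPerm_apply {g : Equiv.Perm L} (hg : g ∈ W) (i : ZMod p) (v : L) :
    resPerm g i v = resFun g i v := by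
  unfold resPerm
  rw [dif_pos hg]
  rfl

theorem resPerm_one (i : ZMod p) : resPerm (1 : Equiv.Perm L) i = 1 := by
  ext v
  rw [resPerm_apply (one_mem W) i v, resFun_one]
  rfl

theorem resPerm_mul {g h : Equiv.Perm L} (hg : g ∈ W) (hh : h ∈ W) (i : ZMod p) :
    resPerm (g * h) i = resPerm g (i + rt h) * resPerm h i := by
  ext v
  rw [Equiv.Perm.mul_apply, resPerm_apply (mul_mem hg hh), resPerm_apply hg,
    resPerm_apply hh, resFun_mul hg hh]

theorem resPerm_mem {g : Equiv.Perm L} {n : ℕ} (hg : g ∈ Γ (n + 1)) (i : ZMod p) :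
    resPerm g i ∈ Γ n := by
  have hgW : g ∈ W := hg.1
  refine ⟨⟨?_, ?_⟩, ?_⟩
  · rw [resPerm_apply hgW]
    show (g [i]).tail = []
    rw [apply_singleton hgW]
    rfl
  · intro v
    obtain ⟨σ, hσc, hσ⟩ := hgW.2 (i :: v)
    refine ⟨σ, hσc, fun x => ?_⟩
    rw [resPerm_apply hgW, resPerm_apply hgW, resFun, resFun,
      show (i :: (v ++ [x])) = (i :: v) ++ [x] from rfl, hσ x]
    rw [apply_cons hgW i v]
    simp
  · intro v hv x
    rw [resPerm_apply hgW, resPerm_apply hgW, resFun, resFun,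
      show (i :: (v ++ [x])) = (i :: v) ++ [x] from rfl,
      hg.2 (i :: v) (by simpa using Nat.succ_le_succ hv) x]
    rw [apply_cons hgW i v]
    simp

/-- Gluing a family of permutations of the subtrees, with trivial root action. -/
def glueFun (G : ZMod p → Equiv.Perm L) : L → L := fun v =>
  match v with
  | [] => []
  | i :: u => i :: G i u

def gluePerm (G : ZMod p → Equiv.Perm L) : Equiv.Perm L where
  toFun := glueFun G
  invFun := glueFun (fun i => (G i)⁻¹)
  left_inv := fun v => by cases v <;> simp [glueFun]
  right_inv := fun v => by cases v <;> simp [glueFun]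

@[simp] theorem gluePerm_nil (G : ZMod p → Equiv.Perm L) : gluePerm G ([] : L) = [] := rfl

@[simp] theorem gluePerm_cons (G : ZMod p → Equiv.Perm L) (i : ZMod p) (u : L) :
    gluePerm G (i :: u) = i :: G i u := rfl

theorem gluePerm_mul (G H : ZMod p → Equiv.Perm L) :
    gluePerm G * gluePerm H = gluePerm (fun i => G i * H i) := by
  ext v
  cases v <;> simp [Equiv.Perm.mul_apply]

theorem gluePerm_one : gluePerm (fun _ : ZMod p => (1 : Equiv.Perm L)) = 1 := by
  ext v
  cases v <;> simp

theorem gluePerm_mem {G : ZMod p → Equiv.Perm L} {n : ℕ} (hG : ∀ i, G i ∈ Γ n) :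
    gluePerm G ∈ Γ (n + 1) := by
  refine ⟨⟨rfl, ?_⟩, ?_⟩
  · intro v
    match v with
    | [] =>
        refine ⟨1, one_mem _, fun x => ?_⟩
        simp [(hG x).1.1]
    | i :: u =>
        obtain ⟨σ, hσc, hσ⟩ := (hG i).1.2 u
        refine ⟨σ, hσc, fun x => ?_⟩
        rw [show ((i :: u) ++ [x] : L) = i :: (u ++ [x]) from rfl]
        simp [hσ x]
  · intro v hv x
    match v with
    | [] => simp at hv
    | i :: u =>
        rw [show ((i :: u) ++ [x] : L) = i :: (u ++ [x]) from rfl]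
        simp [(hG i).2 u (by simpa using Nat.succ_le_succ_iff.mp hv) x]

theorem rt_gluePerm (G : ZMod p → Equiv.Perm L) : rt (gluePerm G) = (0 : ZMod p) := rfl

theorem resPerm_gluePerm {G : ZMod p → Equiv.Perm L} {n : ℕ} (hG : ∀ i, G i ∈ Γ n)
    (i : ZMod p) : resPerm (gluePerm G) i = G i := by
  have hmem : gluePerm G ∈ W := (gluePerm_mem hG).1
  ext v
  rw [resPerm_apply hmem, resFun]
  simp

/-- Reconstruction: an element of the wreath group with trivial root action is
glued from its restrictions. -/
theorem eq_gluePerm_of_rt_zero {g : Equiv.Perm L} (hg : g ∈ W) (h0 : rt g = 0) :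
    g = gluePerm (fun i => resPerm g i) := by
  ext v
  cases v with
  | nil => rw [hg.1]; rfl
  | cons i u =>
      rw [apply_cons hg i u, h0, add_zero, gluePerm_cons, resPerm_apply hg]

end Res

/-! ### Stage 3: finiteness -/

section Finiteness

variable {p : ℕ}

local notation "L" => List (ZMod p)
local notation "W" => wreath (ZMod p) (cyclic p)
local notation "Γ" => GammaLevel p

theorem gamma_ext {n : ℕ} {g h : Equiv.Perm L} (hg : g ∈ Γ n) (hh : h ∈ Γ n)
    (heq : ∀ v : L, v.length ≤ n → g v = h v) : g = h := by
  have : ∀ v : L, g v = h v := by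
    intro v
    induction v using List.reverseRecOn with
    | nil => exact heq [] (by simp)
    | append_singleton u x ih =>
        by_cases hu : (u ++ [x]).length ≤ n
        · exact heq _ hu
        · have hlen : n ≤ u.length := by
            simp at hu; omega
          rw [hg.2 u hlen x, hh.2 u hlen x, ih]
  exact Equiv.ext this

theorem gamma_zero_eq_bot {g : Equiv.Perm L} (hg : g ∈ Γ 0) : g = 1 := by
  refine gamma_ext hg (one_mem _) fun v hv => ?_
  interval_cases h : v.length
  · rw [List.length_eq_zero_iff] at h
    subst h
    rw [hg.1.1]
    rfl

theorem gamma_finite (hp : p ≠ 0) (n : ℕ) : Finite (Γ n : Subgroup (Equiv.Perm L)) := by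
  haveI : NeZero p := ⟨hp⟩
  have hfin : ({l : L | l.length ≤ n}).Finite := List.finite_length_le (ZMod p) n
  haveI : Finite {l : L // l.length ≤ n} := hfin
  refine Finite.of_injective
    (fun g : (Γ n : Subgroup (Equiv.Perm L)) =>
      (fun v : {l : L // l.length ≤ n} =>
        (⟨(g : Equiv.Perm L) v, by
          rw [length_apply_of_mem_wreath g.2.1 v]; exact v.2⟩ : {l : L // l.length ≤ n})))
    ?_
  intro g h hgh
  ext1
  refine gamma_ext g.2 h.2 fun v hv => ?_
  have := congrFun hgh ⟨v, hv⟩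
  simpa using this

theorem subgroup_finite_of_le_gamma (hp : p ≠ 0) {n : ℕ}
    {A : Subgroup (Equiv.Perm L)} (hA : A ≤ Γ n) : Finite A := by
  haveI := gamma_finite hp n
  exact Finite.of_injective (fun a : A => (⟨a.1, hA a.2⟩ : (Γ n : Subgroup (Equiv.Perm L))))
    (fun a b hab => by
      ext1
      have := congrArg Subtype.val hab
      simpa using this)


end Finiteness

/-! ### Stage 4a: more restriction lemmas, subgroups, twisting -/

section Twist

variable {p : ℕ}

local notation "L" => List (ZMod p)
local notation "W" => wreath (ZMod p) (cyclic p)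
local notation "Γ" => GammaLevel p

open Equiv

theorem length_resPerm {g : Perm L} (hg : g ∈ W) (i : ZMod p) (v : L) :
    (resPerm g i v).length = v.length := by
  rw [resPerm_apply hg, resFun]
  have := length_apply_of_mem_wreath hg (i :: v)
  rw [List.length_tail, this]
  rfl

theorem resPerm_inv {g : Perm L} (hg : g ∈ W) (i : ZMod p) :
    (resPerm g i)⁻¹ = resPerm g⁻¹ (i + rt g) := by
  refine Equiv.ext fun v => ?_
  apply (resPerm g i).injective
  rw [show (resPerm g i) ((resPerm g i)⁻¹ v) = v from Equiv.apply_symm_apply _ _, resPerm_apply hg, resPerm_apply (inv_mem hg)]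
  have := resFun_right_inv hg i v
  rw [rt_inv hg, add_neg_cancel_right] at this
  exact this.symm

theorem rt_eq_zero_of_fix {g : Perm L} (hg : g ∈ W) {i : ZMod p} (h : g [i] = [i]) :
    rt g = 0 := by
  have := apply_singleton hg i
  rw [h] at this
  have h2 : i = i + rt g := (List.cons.injEq _ _ _ _ ▸ this).1
  exact (left_eq_add.mp h2)

theorem fix_of_rt_zero {g : Perm L} (hg : g ∈ W) (h : rt g = 0) (i : ZMod p) :
    g [i] = [i] := by
  rw [apply_singleton hg, h, add_zero]

theorem resPerm_mul_fix {g h : Perm L} (hg : g ∈ W) (hh : h ∈ W) (hfix : rt h = 0)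
    (i : ZMod p) : resPerm (g * h) i = resPerm g i * resPerm h i := by
  rw [resPerm_mul hg hh, hfix, add_zero]

theorem resPerm_inv_fix {g : Perm L} (hg : g ∈ W) (hfix : rt g = 0) (i : ZMod p) :
    (resPerm g i)⁻¹ = resPerm g⁻¹ i := by
  rw [resPerm_inv hg, hfix, add_zero]

/-- The stabilizer of `[0]` inside `A`. -/
def stab0 (A : Subgroup (Perm L)) : Subgroup (Perm L) where
  carrier := {g | g ∈ A ∧ g [(0 : ZMod p)] = [0]}
  one_mem' := ⟨A.one_mem, rfl⟩
  mul_mem' := fun {x y} hx hy => ⟨mul_mem hx.1 hy.1, by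
    rw [Equiv.Perm.mul_apply, hy.2, hx.2]⟩
  inv_mem' := fun {x} hx => ⟨inv_mem hx.1, by
    conv_lhs => rw [← hx.2]
    exact Equiv.symm_apply_apply x _⟩

/-- The restriction to the subtree over `[i]` of the elements of `A` that fix `[i]`. -/
noncomputable def resSub (A : Subgroup (Perm L)) (i : ZMod p) : Subgroup (Perm L) where
  carrier := {h | ∃ g, (g ∈ A ∧ g ∈ W ∧ g [i] = [i]) ∧ h = resPerm g i}
  one_mem' := ⟨1, ⟨A.one_mem, one_mem _, rfl⟩, (resPerm_one i).symm⟩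
  mul_mem' := fun {x y} hx hy => by
    obtain ⟨g, ⟨hgA, hgW, hgf⟩, rfl⟩ := hx
    obtain ⟨h, ⟨hhA, hhW, hhf⟩, rfl⟩ := hy
    refine ⟨g * h, ⟨mul_mem hgA hhA, mul_mem hgW hhW, by
      rw [Equiv.Perm.mul_apply, hhf, hgf]⟩, ?_⟩
    rw [resPerm_mul_fix hgW hhW (rt_eq_zero_of_fix hhW hhf) i]
  inv_mem' := fun {x} hx => by
    obtain ⟨g, ⟨hgA, hgW, hgf⟩, rfl⟩ := hx
    refine ⟨g⁻¹, ⟨inv_mem hgA, inv_mem hgW, by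
      conv_lhs => rw [← hgf]
      exact Equiv.symm_apply_apply g _⟩, ?_⟩
    rw [resPerm_inv_fix hgW (rt_eq_zero_of_fix hgW hgf) i]

theorem resSub_le_gamma {A : Subgroup (Perm L)} {n : ℕ} (hA : A ≤ Γ (n + 1)) (i : ZMod p) :
    resSub A i ≤ Γ n := by
  rintro x ⟨g, ⟨hgA, _, _⟩, rfl⟩
  exact resPerm_mem (hA hgA) i

theorem resSub_comm {A : Subgroup (Perm L)}
    (hab : ∀ x ∈ A, ∀ y ∈ A, x * y = y * x) (i : ZMod p) :
    ∀ x ∈ resSub A i, ∀ y ∈ resSub A i, x * y = y * x := by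
  rintro x ⟨g, ⟨hgA, hgW, hgf⟩, rfl⟩ y ⟨h, ⟨hhA, hhW, hhf⟩, rfl⟩
  rw [← resPerm_mul_fix hgW hhW (rt_eq_zero_of_fix hhW hhf) i,
    ← resPerm_mul_fix hhW hgW (rt_eq_zero_of_fix hgW hgf) i, hab g hgA h hhA]

/-- Exponent such that `a ^ expo a i` carries the subtree over `[0]` to the one over `[i]`. -/
def expo (a : Perm L) (i : ZMod p) : ℕ := (i * (rt a)⁻¹).val

/-- The standard conjugator carrying the subtree over `[0]` to the one over `[i]`. -/
noncomputable def wper (a : Perm L) (i : ZMod p) : Perm L := resPerm (a ^ expo a i) 0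

theorem cast_expo [Fact p.Prime] (a : Perm L) (i : ZMod p) :
    ((expo a i : ℕ) : ZMod p) = i * (rt a)⁻¹ := by
  haveI : NeZero p := ⟨(Fact.out : p.Prime).ne_zero⟩
  rw [expo, ZMod.natCast_val, ZMod.cast_id]

theorem rt_pow_expo [Fact p.Prime] {a : Perm L} (haW : a ∈ W) (hc : rt a ≠ 0) (i : ZMod p) :
    rt (a ^ expo a i) = i := by
  rw [rt_pow haW, cast_expo]
  field_simp

theorem wper_zero [Fact p.Prime] (a : Perm L) : wper a 0 = 1 := by
  have h : expo a (0 : ZMod p) = 0 := by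
    haveI : NeZero p := ⟨(Fact.out : p.Prime).ne_zero⟩
    rw [expo, zero_mul, ZMod.val_zero]
  rw [wper, h, pow_zero, resPerm_one]

theorem wper_mem {a : Perm L} {n : ℕ} (ha : a ∈ Γ (n + 1)) (i : ZMod p) :
    wper a i ∈ Γ n := resPerm_mem (pow_mem ha _) 0

/-- Twisting: an element of an abelian group commuting with a level-transitive
element has conjugate restrictions at all subtrees. -/
theorem twist [Fact p.Prime] {n : ℕ} {A : Subgroup (Perm L)} (hA : A ≤ Γ (n + 1))
    (hab : ∀ x ∈ A, ∀ y ∈ A, x * y = y * x) {a : Perm L} (haA : a ∈ A) (hc : rt a ≠ 0)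
    {g : Perm L} (hgA : g ∈ A) (h0 : rt g = 0) (i : ZMod p) :
    resPerm g i = wper a i * resPerm g 0 * (wper a i)⁻¹ := by
  have haW : a ∈ W := (hA haA).1
  have hgW : g ∈ W := (hA hgA).1
  have hkW : a ^ expo a i ∈ W := pow_mem haW _
  have hcomm : g * a ^ expo a i = a ^ expo a i * g := hab g hgA _ (pow_mem haA _)
  have h1 : resPerm (g * a ^ expo a i) 0 = resPerm g i * wper a i := by
    rw [resPerm_mul hgW hkW, zero_add, rt_pow_expo haW hc]
    rfl
  have h2 : resPerm (a ^ expo a i * g) 0 = wper a i * resPerm g 0 := by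
    rw [resPerm_mul hkW hgW, h0, add_zero]
    rfl
  have h3 : resPerm g i * wper a i = wper a i * resPerm g 0 := by
    rw [← h1, ← h2, hcomm]
  rw [← h3]
  group

theorem eq_of_resPerm_zero_eq [Fact p.Prime] {n : ℕ} {A : Subgroup (Perm L)}
    (hA : A ≤ Γ (n + 1)) (hab : ∀ x ∈ A, ∀ y ∈ A, x * y = y * x) {a : Perm L}
    (haA : a ∈ A) (hc : rt a ≠ 0) {g h : Perm L} (hgA : g ∈ A) (hg0 : rt g = 0)
    (hhA : h ∈ A) (hh0 : rt h = 0) (heq : resPerm g 0 = resPerm h 0) : g = h := by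
  rw [eq_gluePerm_of_rt_zero (hA hgA).1 hg0, eq_gluePerm_of_rt_zero (hA hhA).1 hh0]
  congr 1
  funext i
  rw [twist hA hab haA hc hgA hg0 i, twist hA hab haA hc hhA hh0 i, heq]

end Twist

/-! ### Stage 4b: lifting and the solo-case construction -/

section Lift

variable {p : ℕ}

local notation "L" => List (ZMod p)
local notation "W" => wreath (ZMod p) (cyclic p)
local notation "Γ" => GammaLevel p

open Equiv

/-- The canonical lift of `b` along the twisting of `a`. -/
noncomputable def liftP (a b : Perm L) : Perm L :=
  gluePerm (fun i => wper a i * b * (wper a i)⁻¹)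

theorem liftP_apply_cons (a b : Perm L) (i : ZMod p) (u : L) :
    liftP a b (i :: u) = i :: (wper a i * b * (wper a i)⁻¹) u := rfl

theorem liftP_apply_nil (a b : Perm L) : liftP a b ([] : L) = [] := rfl

theorem liftP_mem {a : Perm L} {n : ℕ} (ha : a ∈ Γ (n + 1)) {b : Perm L} (hb : b ∈ Γ n) :
    liftP a b ∈ Γ (n + 1) :=
  gluePerm_mem (fun i => mul_mem (mul_mem (wper_mem ha i) hb) (inv_mem (wper_mem ha i)))

theorem liftP_mul (a b b' : Perm L) : liftP a b * liftP a b' = liftP a (b * b') := by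
  rw [liftP, liftP, liftP, gluePerm_mul]
  congr 1
  funext i
  group

theorem liftP_one (a : Perm L) : liftP a 1 = 1 := by
  have h : (fun i : ZMod p => wper a i * 1 * (wper a i)⁻¹) = fun _ => 1 := by
    funext i; group
  rw [liftP, h, gluePerm_one]

theorem liftP_inv (a b : Perm L) : (liftP a b)⁻¹ = liftP a b⁻¹ := by
  have h : liftP a b * liftP a b⁻¹ = 1 := by rw [liftP_mul, mul_inv_cancel, liftP_one]
  exact inv_eq_of_mul_eq_one_right h

theorem liftP_inj [Fact p.Prime] {a b b' : Perm L} (h : liftP a b = liftP a b') :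
    b = b' := by
  refine Equiv.ext fun u => ?_
  have h2 := congrArg (fun (g : Perm L) => g ((0 : ZMod p) :: u)) h
  simp only [liftP_apply_cons, wper_zero] at h2
  have h3 := (List.cons.injEq _ _ _ _ ▸ h2).2
  simpa using h3

theorem rt_liftP (a b : Perm L) : rt (liftP a b) = 0 := rfl

theorem liftP_comm [Fact p.Prime] {n : ℕ} {A B' : Subgroup (Perm L)}
    (hA : A ≤ Γ (n + 1)) (hab : ∀ x ∈ A, ∀ y ∈ A, x * y = y * x)
    {a : Perm L} (haA : a ∈ A) (hc : rt a ≠ 0)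
    (hB'Γ : B' ≤ Γ n) (hB'ab : ∀ x ∈ B', ∀ y ∈ B', x * y = y * x)
    (hsub : ∀ g ∈ A, rt g = 0 → resPerm g 0 ∈ B')
    {b : Perm L} (hb : b ∈ B') :
    a * liftP a b = liftP a b * a := by
  have haW : a ∈ W := (hA haA).1
  set c := rt a with hc_def
  -- the key conjugation identity
  have key : ∀ i : ZMod p, resPerm a i * (wper a i * b * (wper a i)⁻¹) =
      (wper a (i + c) * b * (wper a (i + c))⁻¹) * resPerm a i := by
    intro i
    set k := expo a i with hk
    set δ : ℤ := (k : ℤ) + 1 - expo a (i + c) with hδ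
    have hdA : a ^ δ ∈ A := zpow_mem haA δ
    have hdW : a ^ δ ∈ W := zpow_mem haW δ
    have hd_rt : rt (a ^ δ) = 0 := by
      rw [rt_zpow haW δ]
      have : ((δ : ℤ) : ZMod p) = (k : ZMod p) + 1 - (expo a (i + c) : ZMod p) := by
        push_cast [hδ]; ring
      rw [this, hk, cast_expo, cast_expo]
      rw [← hc_def]
      field_simp
      ring
    set d := resPerm (a ^ δ) 0 with hd
    have hdB : d ∈ B' := hsub _ hdA hd_rt
    have h1 : resPerm (a ^ (k + 1)) 0 = resPerm a i * wper a i := by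
      rw [pow_succ', resPerm_mul haW (pow_mem haW k), zero_add, rt_pow_expo haW hc]
      rfl
    have h2 : resPerm (a ^ (k + 1)) 0 = wper a (i + c) * d := by
      have hsplit : (a ^ (k + 1) : Perm L) = a ^ expo a (i + c) * a ^ δ := by
        rw [← zpow_natCast a (k + 1), ← zpow_natCast a (expo a (i + c)), ← zpow_add]
        congr 1
        push_cast [hδ]; ring
      rw [hsplit, resPerm_mul (pow_mem haW _) hdW, hd_rt, zero_add]
      rfl
    have h12 : resPerm a i * wper a i = wper a (i + c) * d := by rw [← h1, h2]
    have hre : resPerm a i = wper a (i + c) * d * (wper a i)⁻¹ := by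
      rw [← h12]; group
    have hcd : d * b = b * d := hB'ab d hdB b hb
    rw [hre]
    calc wper a (i + c) * d * (wper a i)⁻¹ * (wper a i * b * (wper a i)⁻¹)
        = wper a (i + c) * (d * b) * (wper a i)⁻¹ := by group
      _ = wper a (i + c) * (b * d) * (wper a i)⁻¹ := by rw [hcd]
      _ = wper a (i + c) * b * (wper a (i + c))⁻¹ *
            (wper a (i + c) * d * (wper a i)⁻¹) := by group
  refine Equiv.ext fun v => ?_
  cases v with
  | nil =>
      show a (liftP a b []) = liftP a b (a [])
      rw [liftP_apply_nil, haW.1]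
      rfl
  | cons i u =>
      show a (liftP a b (i :: u)) = liftP a b (a (i :: u))
      rw [liftP_apply_cons, apply_cons haW, apply_cons haW, liftP_apply_cons]
      congr 1
      have := congrArg (fun (g : Perm L) => g u) (key i)
      simp only [Equiv.Perm.mul_apply] at this
      rw [resPerm_apply haW, resPerm_apply haW] at this
      simp only [Equiv.Perm.mul_apply]
      exact this

/-- An element of `A` fixing level one is the lift of its restriction at `0`. -/
theorem eq_liftP_of_rt_zero [Fact p.Prime] {n : ℕ} {A : Subgroup (Perm L)}
    (hA : A ≤ Γ (n + 1)) (hab : ∀ x ∈ A, ∀ y ∈ A, x * y = y * x)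
    {a : Perm L} (haA : a ∈ A) (hc : rt a ≠ 0)
    {g : Perm L} (hgA : g ∈ A) (h0 : rt g = 0) : g = liftP a (resPerm g 0) := by
  have h1 := eq_gluePerm_of_rt_zero (hA hgA).1 h0
  rw [liftP]
  conv_lhs => rw [h1]
  congr 1
  funext i
  exact twist hA hab haA hc hgA h0 i

/-- The solo-case construction of a maximal abelian extension. -/
theorem solo_construction [Fact p.Prime] {n : ℕ} {A B' : Subgroup (Perm L)}
    (hA : A ≤ Γ (n + 1)) (hab : ∀ x ∈ A, ∀ y ∈ A, x * y = y * x)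
    {a : Perm L} (haA : a ∈ A) (hc : rt a ≠ 0)
    (hB'Γ : B' ≤ Γ n) (hB'ab : ∀ x ∈ B', ∀ y ∈ B', x * y = y * x)
    (hsub : ∀ g ∈ A, rt g = 0 → resPerm g 0 ∈ B')
    (φ : L → List ℕ)
    (hAφ : ∀ g ∈ A, ∀ v : L, v.length ≤ n + 1 → φ (g v) = φ v)
    (hφ' : ∀ b ∈ B', ∀ u : L, u.length ≤ n → φ ((0 : ZMod p) :: b u) = φ (0 :: u)) :
    ∃ B : Subgroup (Perm L), A ≤ B ∧ B ≤ Γ (n + 1) ∧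
      (∀ x ∈ B, ∀ y ∈ B, x * y = y * x) ∧ Nat.card B = p * Nat.card B' ∧
      (∀ g ∈ B, ∀ v : L, v.length ≤ n + 1 → φ (g v) = φ v) := by
  have haW : a ∈ W := (hA haA).1
  set c := rt a with hc_def
  have hcommz : ∀ (s : ℤ), ∀ b ∈ B', Commute (a ^ s) (liftP a b) := by
    intro s b hb
    have hC : Commute a (liftP a b) := liftP_comm hA hab haA hc hB'Γ hB'ab hsub hb
    exact Commute.zpow_left hC s
  -- a^δ with trivial root action is a lift
  have hzlift : ∀ (δ : ℤ), ((δ : ZMod p)) = 0 →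
      ∃ d ∈ B', a ^ δ = liftP a d := by
    intro δ hδ
    have hdA : a ^ δ ∈ A := zpow_mem haA δ
    have hd_rt : rt (a ^ δ) = 0 := by
      rw [rt_zpow haW δ, hδ, zero_mul]
    exact ⟨resPerm (a ^ δ) 0, hsub _ hdA hd_rt,
      eq_liftP_of_rt_zero hA hab haA hc hdA hd_rt⟩
  refine ⟨{ carrier := {g | ∃ s : ℤ, ∃ b ∈ B', g = a ^ s * liftP a b}
            one_mem' := ⟨0, 1, B'.one_mem, by rw [zpow_zero, liftP_one, one_mul]⟩
            mul_mem' := ?_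
            inv_mem' := ?_ }, ?_, ?_, ?_, ?_, ?_⟩
  · rintro x y ⟨s, b, hb, rfl⟩ ⟨t, b', hb', rfl⟩
    refine ⟨s + t, b * b', mul_mem hb hb', ?_⟩
    rw [show a ^ s * liftP a b * (a ^ t * liftP a b') =
      a ^ s * (liftP a b * a ^ t) * liftP a b' by group, ← (hcommz t b hb).eq]
    rw [← liftP_mul, zpow_add]
    group
  · rintro x ⟨s, b, hb, rfl⟩
    refine ⟨-s, b⁻¹, inv_mem hb, ?_⟩
    rw [mul_inv_rev, liftP_inv, zpow_neg]
    exact ((hcommz s b⁻¹ (inv_mem hb)).inv_left.eq).symm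
  · -- A ≤ B
    intro g hgA
    have hgW : g ∈ W := (hA hgA).1
    set t := rt g with ht
    set k := expo a t with hk
    have hgW2 : (a ^ (-(k : ℤ)) * g) ∈ A := mul_mem (zpow_mem haA _) hgA
    have h0 : rt (a ^ (-(k : ℤ)) * g) = 0 := by
      rw [rt_mul (zpow_mem haW _) hgW, rt_zpow haW]
      push_cast [hk, cast_expo]
      field_simp
      rw [mul_div_cancel_right₀ _ (show rt a ≠ 0 from hc), ht, neg_add_cancel]
    refine ⟨(k : ℤ), resPerm (a ^ (-(k : ℤ)) * g) 0, hsub _ hgW2 h0, ?_⟩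
    rw [← eq_liftP_of_rt_zero hA hab haA hc hgW2 h0]
    group
  · -- B ≤ Γ (n+1)
    rintro x ⟨s, b, hb, rfl⟩
    exact mul_mem (zpow_mem (hA haA) s) (liftP_mem (hA haA) (hB'Γ hb))
  · -- abelian
    rintro x ⟨s, b, hb, rfl⟩ y ⟨t, b', hb', rfl⟩
    have h1 : liftP a b * liftP a b' = liftP a b' * liftP a b := by
      rw [liftP_mul, liftP_mul, hB'ab b hb b' hb']
    have h2 : Commute (a ^ s) (liftP a b') := hcommz s b' hb'
    have h3 : Commute (a ^ t) (liftP a b) := hcommz t b hb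
    have h4 : Commute (a ^ s) (a ^ t) := Commute.zpow_zpow_self a s t
    calc a ^ s * liftP a b * (a ^ t * liftP a b')
        = a ^ s * (liftP a b * a ^ t) * liftP a b' := by group
      _ = a ^ s * (a ^ t * liftP a b) * liftP a b' := by rw [← h3.eq]
      _ = (a ^ s * a ^ t) * (liftP a b * liftP a b') := by group
      _ = (a ^ t * a ^ s) * (liftP a b' * liftP a b) := by rw [h4.eq, h1]
      _ = a ^ t * (a ^ s * liftP a b') * liftP a b := by group
      _ = a ^ t * (liftP a b' * a ^ s) * liftP a b := by rw [h2.eq]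
      _ = a ^ t * liftP a b' * (a ^ s * liftP a b) := by group
  · -- cardinality
    haveI : NeZero p := ⟨(Fact.out : p.Prime).ne_zero⟩
    have hbij : Function.Bijective
        (fun kb : ZMod p × B' =>
          (⟨a ^ ((kb.1.val : ℕ) : ℤ) * liftP a kb.2.1,
            ⟨_, kb.2.1, kb.2.2, rfl⟩⟩ :
            {g : Perm L // ∃ s : ℤ, ∃ b ∈ B', g = a ^ s * liftP a b})) := by
      constructor
      · rintro ⟨k, b, hb⟩ ⟨k', b', hb'⟩ heq
        have heq2 : a ^ ((k.val : ℕ) : ℤ) * liftP a b = a ^ ((k'.val : ℕ) : ℤ) * liftP a b' :=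
          congrArg Subtype.val heq
        have hfix : ∀ bb, bb ∈ B' → liftP a bb [(0 : ZMod p)] = [0] := by
          intro bb hbb
          have h1 : liftP a bb ∈ W := (liftP_mem (hA haA) (hB'Γ hbb)).1
          exact fix_of_rt_zero h1 (rt_liftP a bb) 0
        have happ := congrArg (fun (g : Perm L) => g [(0 : ZMod p)]) heq2
        simp only [Equiv.Perm.mul_apply] at happ
        rw [hfix b hb, hfix b' hb'] at happ
        rw [apply_singleton (zpow_mem haW _), apply_singleton (zpow_mem haW _),
          rt_zpow haW, rt_zpow haW] at happ
        have hheads := (List.cons.injEq _ _ _ _ ▸ happ).1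
        have hkc : (k : ZMod p) * c = (k' : ZMod p) * c := by
          push_cast at hheads
          rw [ZMod.natCast_val, ZMod.cast_id, ZMod.natCast_val, ZMod.cast_id] at hheads
          simpa using hheads
        have hkk : k = k' := mul_right_cancel₀ hc hkc
        subst hkk
        have hbb2 : liftP a b = liftP a b' := mul_left_cancel heq2
        have hbbeq := liftP_inj hbb2
        exact congrArg (fun x => ((k : ZMod p), x)) (Subtype.ext hbbeq)
      · rintro ⟨g, s, b, hb, rfl⟩
        obtain ⟨d, hd, hdlift⟩ := hzlift (s - ((((s : ZMod p)).val : ℕ) : ℤ)) (by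
          push_cast
          rw [ZMod.natCast_val, ZMod.cast_id]
          ring)
        refine ⟨⟨(s : ZMod p), ⟨d * b, mul_mem hd hb⟩⟩, ?_⟩
        ext : 1
        show a ^ (((s : ZMod p).val : ℕ) : ℤ) * liftP a (d * b) = a ^ s * liftP a b
        rw [← liftP_mul, ← hdlift]
        rw [show a ^ s = a ^ ((((s : ZMod p)).val : ℕ) : ℤ) * a ^ (s - ((((s : ZMod p)).val : ℕ) : ℤ)) by
          rw [← zpow_add]; congr 1; ring]
        group
    have hcard := Nat.card_congr (Equiv.ofBijective _ hbij)
    rw [Nat.card_prod, Nat.card_zmod] at hcard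
    exact hcard.symm ▸ rfl
  · -- φ-invariance
    rintro g ⟨s, b, hb, rfl⟩ v hv
    have hwW : ∀ i : ZMod p, wper a i ∈ W := fun i => (wper_mem (hA haA) i).1
    have hbW : b ∈ W := (hB'Γ hb).1
    have hliftφ : φ (liftP a b v) = φ v := by
      cases v with
      | nil => rw [liftP_apply_nil]
      | cons i u' =>
          have hu' : u'.length ≤ n := by simpa using hv
          have hkey : ∀ z : L, z.length ≤ n →
              φ (i :: z) = φ ((0 : ZMod p) :: ((wper a i)⁻¹ z)) := by
            intro z hz
            have hmemA : (a ^ expo a i) ∈ A := pow_mem haA _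
            have happ2 : (a ^ expo a i) ((0 : ZMod p) :: ((wper a i)⁻¹ z)) = i :: z := by
              rw [apply_cons (pow_mem haW _), rt_pow_expo haW hc, zero_add]
              congr 1
              rw [← resPerm_apply (pow_mem haW _) 0]
              exact Equiv.apply_symm_apply (wper a i) z
            have hlen : ((0 : ZMod p) :: ((wper a i)⁻¹ z)).length ≤ n + 1 := by
              have := length_apply_of_mem_wreath (inv_mem (hwW i)) z
              simp only [List.length_cons, this]
              omega
            have h5 := hAφ _ hmemA _ hlen
            rw [happ2] at h5
            exact h5
          have hlen2 : ((wper a i * b * (wper a i)⁻¹) u').length ≤ n := by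
            have := length_apply_of_mem_wreath
              (mul_mem (mul_mem (hwW i) hbW) (inv_mem (hwW i))) u'
            rw [this]; exact hu'
          rw [liftP_apply_cons, hkey _ hlen2, hkey u' hu']
          rw [show (wper a i)⁻¹ ((wper a i * b * (wper a i)⁻¹) u') =
            b ((wper a i)⁻¹ u') by simp [Equiv.Perm.mul_apply]]
          have hlen3 : ((wper a i)⁻¹ u').length ≤ n := by
            have := length_apply_of_mem_wreath (inv_mem (hwW i)) u'
            rw [this]; exact hu'
          exact hφ' b hb _ hlen3
    have hlen4 : (liftP a b v).length ≤ n + 1 := by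
      have := length_apply_of_mem_wreath (liftP_mem (hA haA) (hB'Γ hb)).1 v
      rw [this]; exact hv
    calc φ ((a ^ s * liftP a b) v) = φ ((a ^ s) (liftP a b v)) := by
          rw [Equiv.Perm.mul_apply]
      _ = φ (liftP a b v) := hAφ _ (zpow_mem haA s) _ hlen4
      _ = φ v := hliftφ

end Lift

/-! ### Stage 4c: the fixing-case construction and counting -/

section Fixes

variable {p : ℕ}

local notation "L" => List (ZMod p)
local notation "W" => wreath (ZMod p) (cyclic p)
local notation "Γ" => GammaLevel p

open Equiv

theorem gluePerm_inv (G : ZMod p → Perm L) :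
    (gluePerm G)⁻¹ = gluePerm fun i => (G i)⁻¹ := by
  have h : gluePerm G * gluePerm (fun i => (G i)⁻¹) = 1 := by
    rw [gluePerm_mul]
    have h2 : (fun i => G i * (G i)⁻¹) = fun _ : ZMod p => (1 : Perm L) :=
      funext fun i => mul_inv_cancel (G i)
    rw [h2, gluePerm_one]
  exact inv_eq_of_mul_eq_one_right h

theorem fixes_construction [NeZero p] {n : ℕ} {A : Subgroup (Perm L)}
    (hA : A ≤ Γ (n + 1)) (htriv : ∀ g ∈ A, rt g = 0)
    (B' : ZMod p → Subgroup (Perm L)) (hB'Γ : ∀ i, B' i ≤ Γ n)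
    (hB'ab : ∀ i, ∀ x ∈ B' i, ∀ y ∈ B' i, x * y = y * x)
    (hsub : ∀ g ∈ A, ∀ i : ZMod p, resPerm g i ∈ B' i)
    (φ : L → List ℕ)
    (hφ' : ∀ i : ZMod p, ∀ b ∈ B' i, ∀ u : L, u.length ≤ n → φ (i :: b u) = φ (i :: u)) :
    ∃ B : Subgroup (Perm L), A ≤ B ∧ B ≤ Γ (n + 1) ∧
      (∀ x ∈ B, ∀ y ∈ B, x * y = y * x) ∧
      Nat.card B = ∏ i : ZMod p, Nat.card (B' i) ∧
      (∀ g ∈ B, ∀ v : L, v.length ≤ n + 1 → φ (g v) = φ v) := by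
  refine ⟨{ carrier := {g | ∃ G : ZMod p → Perm L, (∀ i, G i ∈ B' i) ∧ g = gluePerm G}
            one_mem' := ⟨fun _ => 1, fun i => (B' i).one_mem, gluePerm_one.symm⟩
            mul_mem' := ?_
            inv_mem' := ?_ }, ?_, ?_, ?_, ?_, ?_⟩
  · rintro x y ⟨G, hG, rfl⟩ ⟨H, hH, rfl⟩
    exact ⟨fun i => G i * H i, fun i => mul_mem (hG i) (hH i), gluePerm_mul G H⟩
  · rintro x ⟨G, hG, rfl⟩
    exact ⟨fun i => (G i)⁻¹, fun i => inv_mem (hG i), (gluePerm_inv G).symm⟩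
  · intro g hgA
    exact ⟨fun i => resPerm g i, hsub g hgA,
      eq_gluePerm_of_rt_zero (hA hgA).1 (htriv g hgA)⟩
  · rintro x ⟨G, hG, rfl⟩
    exact gluePerm_mem fun i => hB'Γ i (hG i)
  · rintro x ⟨G, hG, rfl⟩ y ⟨H, hH, rfl⟩
    rw [gluePerm_mul, gluePerm_mul]
    congr 1
    funext i
    exact hB'ab i (G i) (hG i) (H i) (hH i)
  · have hbij : Function.Bijective
        (fun G : (∀ i : ZMod p, B' i) =>
          (⟨gluePerm (fun i => (G i).1), ⟨fun i => (G i).1, fun i => (G i).2, rfl⟩⟩ :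
            {g : Perm L // ∃ G : ZMod p → Perm L, (∀ i, G i ∈ B' i) ∧ g = gluePerm G})) := by
      constructor
      · intro G H heq
        have heq2 : gluePerm (fun i => (G i).1) = gluePerm (fun i => (H i).1) :=
          congrArg Subtype.val heq
        funext i
        refine Subtype.ext (Equiv.ext fun u => ?_)
        have h3 := congrArg (fun (g : Perm L) => g (i :: u)) heq2
        simp only [gluePerm_cons] at h3
        exact (List.cons.injEq _ _ _ _ ▸ h3).2
      · rintro ⟨g, G, hG, rfl⟩
        exact ⟨fun i => ⟨G i, hG i⟩, rfl⟩
    have hcard := Nat.card_congr (Equiv.ofBijective _ hbij)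
    rw [Nat.card_pi] at hcard
    exact hcard.symm ▸ rfl
  · rintro g ⟨G, hG, rfl⟩ v hv
    cases v with
    | nil => rfl
    | cons i u =>
        rw [gluePerm_cons]
        exact hφ' i (G i) (hG i) u (by simpa using hv)

theorem solo_count [Fact p.Prime] {n : ℕ} {A : Subgroup (Perm L)}
    (hA : A ≤ Γ (n + 1)) (hab : ∀ x ∈ A, ∀ y ∈ A, x * y = y * x)
    {a : Perm L} (haA : a ∈ A) (hc : rt a ≠ 0) :
    Nat.card A = p * Nat.card (resSub A 0) := by
  haveI : NeZero p := ⟨(Fact.out : p.Prime).ne_zero⟩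
  have haW : a ∈ W := (hA haA).1
  -- first bijection : ZMod p × stab0 A ≃ A
  have hbij1 : Function.Bijective
      (fun kg : ZMod p × stab0 A => (⟨a ^ (kg.1.val) * kg.2.1,
        mul_mem (pow_mem haA _) kg.2.2.1⟩ : A)) := by
    constructor
    · rintro ⟨k, g, hgA, hg0⟩ ⟨k', g', hg'A, hg'0⟩ heq
      have heq2 : a ^ (k.val) * g = a ^ (k'.val) * g' := congrArg Subtype.val heq
      have happ := congrArg (fun (x : Perm L) => x [(0 : ZMod p)]) heq2
      simp only [Equiv.Perm.mul_apply] at happ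
      rw [hg0, hg'0, apply_singleton (pow_mem haW _), apply_singleton (pow_mem haW _),
        rt_pow haW, rt_pow haW] at happ
      have hheads := (List.cons.injEq _ _ _ _ ▸ happ).1
      rw [ZMod.natCast_val, ZMod.cast_id, ZMod.natCast_val, ZMod.cast_id] at hheads
      have hkk : k = k' := mul_right_cancel₀ hc (by simpa using hheads)
      subst hkk
      have : g = g' := mul_left_cancel heq2
      exact congrArg (fun x => (k, x)) (Subtype.ext this)
    · rintro ⟨h, hhA⟩
      have hhW : h ∈ W := (hA hhA).1
      set k : ZMod p := rt h * (rt a)⁻¹ with hk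
      have hmem : ((a ^ (k.val))⁻¹ * h) ∈ A := mul_mem (inv_mem (pow_mem haA _)) hhA
      have h0 : rt ((a ^ (k.val))⁻¹ * h) = 0 := by
        rw [rt_mul (inv_mem (pow_mem haW _)) hhW, rt_inv (pow_mem haW _), rt_pow haW,
          ZMod.natCast_val, ZMod.cast_id, hk]
        field_simp
        ring
      refine ⟨⟨k, ⟨(a ^ (k.val))⁻¹ * h, hmem, fix_of_rt_zero ((hA hmem).1) h0 0⟩⟩, ?_⟩
      ext : 1
      show a ^ (k.val) * ((a ^ (k.val))⁻¹ * h) = h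
      group
  have hcard1 := Nat.card_congr (Equiv.ofBijective _ hbij1)
  rw [Nat.card_prod, Nat.card_zmod] at hcard1
  -- second bijection : stab0 A ≃ resSub A 0
  have hbij2 : Function.Bijective
      (fun g : stab0 A => (⟨resPerm g.1 0,
        ⟨g.1, ⟨g.2.1, (hA g.2.1).1, g.2.2⟩, rfl⟩⟩ : resSub A 0)) := by
    constructor
    · rintro ⟨g, hgA, hg0⟩ ⟨g', hg'A, hg'0⟩ heq
      have heq2 : resPerm g 0 = resPerm g' 0 := congrArg Subtype.val heq
      exact Subtype.ext (eq_of_resPerm_zero_eq hA hab haA hc hgA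
        (rt_eq_zero_of_fix (hA hgA).1 hg0) hg'A (rt_eq_zero_of_fix (hA hg'A).1 hg'0) heq2)
    · rintro ⟨x, g, ⟨hgA, hgW, hgf⟩, rfl⟩
      exact ⟨⟨g, hgA, hgf⟩, rfl⟩
  have hcard2 := Nat.card_congr (Equiv.ofBijective _ hbij2)
  rw [← hcard1, ← hcard2]

end Fixes



/-- A combinatorial model of a rooted tree of depth `n`: a prefix-closed set of
finite sequences (the vertices), all of length (= depth) at most `n`, in which
every vertex of depth `< n` has at least one child. -/
structure RootedTree (n : ℕ) where
  verts : Set (List ℕ)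
  nil_mem : [] ∈ verts
  prefix_closed : ∀ v ∈ verts, ∀ u : List ℕ, u <+: v → u ∈ verts
  length_le : ∀ v ∈ verts, v.length ≤ n
  has_child : ∀ v ∈ verts, v.length < n → ∃ x : ℕ, v ++ [x] ∈ verts

/-- The number of children of a vertex `v` in the rooted tree `R`. -/
noncomputable def childCount {n : ℕ} (R : RootedTree n) (v : List ℕ) : ℕ :=
  Nat.card {x : ℕ // v ++ [x] ∈ R.verts}

/-- `R` is a `1-p` tree: every vertex of depth `< n` has either `1` or `p` children. -/
def Is1pTree {n : ℕ} (p : ℕ) (R : RootedTree n) : Prop :=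
  ∀ v ∈ R.verts, v.length < n → childCount R v = 1 ∨ childCount R v = p

/-- `S(R)`: the number of solo vertices of `R`, i.e. vertices with exactly one child. -/
noncomputable def soloCount {n : ℕ} (R : RootedTree n) : ℕ :=
  Nat.card {v : List ℕ // v ∈ R.verts ∧ v.length < n ∧ childCount R v = 1}

/-- A subgroup `A ⊆ Γ_n(p)` (acting on the depth-`n` tree, whose vertices are the
lists over `ZMod p` of length `≤ n`) belongs to the rooted tree `R` if its orbit
tree `T_n/A` is isomorphic to `R` as a rooted tree: there is a map `φ` from
vertices to `R.verts` which is level-preserving, constant exactly on `A`-orbits,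
surjective onto `R.verts`, and carries the child relation to the child relation. -/
def belongsTo (p n : ℕ) (A : Subgroup (Equiv.Perm (List (ZMod p))))
    (R : RootedTree n) : Prop :=
  ∃ φ : List (ZMod p) → List ℕ,
    (∀ v : List (ZMod p), v.length ≤ n → φ v ∈ R.verts ∧ (φ v).length = v.length) ∧
    (∀ v w : List (ZMod p), v.length ≤ n → w.length ≤ n →
      (φ v = φ w ↔ ∃ g ∈ A, g v = w)) ∧
    (∀ r ∈ R.verts, ∃ v : List (ZMod p), v.length ≤ n ∧ φ v = r) ∧
    (∀ v : List (ZMod p), v.length < n → ∀ x : ZMod p, φ v <+: φ (v ++ [x]))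

/-! ### Stage 5: subtrees and solo counting -/

section Trees

variable {p : ℕ}

local notation "L" => List (ZMod p)
local notation "W" => wreath (ZMod p) (cyclic p)
local notation "Γ" => GammaLevel p

open Equiv

/-- The subtree of `R` over the depth-one vertex `[m]`. -/
def subtree {n : ℕ} (R : RootedTree (n + 1)) (m : ℕ) (hm : [m] ∈ R.verts) :
    RootedTree n where
  verts := {u | m :: u ∈ R.verts}
  nil_mem := hm
  prefix_closed := fun v hv u hu =>
    R.prefix_closed (m :: v) hv (m :: u) (List.cons_prefix_cons.mpr ⟨rfl, hu⟩)
  length_le := fun v hv => by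
    have := R.length_le (m :: v) hv
    simpa using this
  has_child := fun v hv hlen => by
    have := R.has_child (m :: v) hv (by simpa using hlen)
    simpa using this

theorem childCount_subtree {n : ℕ} (R : RootedTree (n + 1)) (m : ℕ)
    (hm : [m] ∈ R.verts) (u : List ℕ) :
    childCount (subtree R m hm) u = childCount R (m :: u) := rfl

theorem is1p_subtree {n : ℕ} {R : RootedTree (n + 1)} (hR : Is1pTree p R) (m : ℕ)
    (hm : [m] ∈ R.verts) : Is1pTree p (subtree R m hm) := by
  intro u hu hlen
  rw [childCount_subtree]
  exact hR (m :: u) hu (by simpa using hlen)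

theorem subtree_verts_finite {n : ℕ} {R : RootedTree (n + 1)} (hfin : R.verts.Finite)
    (m : ℕ) (hm : [m] ∈ R.verts) : (subtree R m hm).verts.Finite := by
  have : (subtree R m hm).verts = (fun u => m :: u) ⁻¹' R.verts := rfl
  rw [this]
  exact Set.Finite.preimage (Set.injOn_of_injective (fun u v h =>
    (List.cons.injEq _ _ _ _ ▸ h).2)) hfin

theorem phi_prefix {n : ℕ} (φ : L → List ℕ)
    (hφ4 : ∀ v : L, v.length < n → ∀ x : ZMod p, φ v <+: φ (v ++ [x]))
    (u w : L) (h : (u ++ w).length ≤ n) : φ u <+: φ (u ++ w) := by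
  induction w using List.reverseRecOn with
  | nil => simp
  | append_singleton w x ih =>
      rw [← List.append_assoc] at h ⊢
      have hlen : (u ++ w).length < n := by
        simp only [List.length_append] at h ⊢
        simp at h
        omega
      exact (ih (le_of_lt hlen)).trans (hφ4 (u ++ w) hlen x)

/-- the fibers of the orbit map of a bigger group with the same orbit tree agree
with those of the smaller group. -/
theorem fiber_refine {n : ℕ} {A' B' : Subgroup (Perm L)} (hle : A' ≤ B')
    {R' : RootedTree n} (hfin : R'.verts.Finite) (φ' ψ : L → List ℕ)
    (hφ1 : ∀ v : L, v.length ≤ n → φ' v ∈ R'.verts ∧ (φ' v).length = v.length)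
    (hφ2 : ∀ v w : L, v.length ≤ n → w.length ≤ n → (φ' v = φ' w ↔ ∃ g ∈ A', g v = w))
    (hφ3 : ∀ r ∈ R'.verts, ∃ v : L, v.length ≤ n ∧ φ' v = r)
    (hψ1 : ∀ v : L, v.length ≤ n → ψ v ∈ R'.verts ∧ (ψ v).length = v.length)
    (hψ2 : ∀ v w : L, v.length ≤ n → w.length ≤ n → (ψ v = ψ w ↔ ∃ g ∈ B', g v = w))
    (hψ3 : ∀ r ∈ R'.verts, ∃ v : L, v.length ≤ n ∧ ψ v = r) :
    ∀ v w : L, v.length ≤ n → w.length ≤ n → ψ v = ψ w → φ' v = φ' w := by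
  intro v w hv hw hvw
  set ℓ := v.length with hℓ
  have hwl : w.length = ℓ := by
    have h1 := (hψ1 v hv).2
    have h2 := (hψ1 w hw).2
    rw [hvw] at h1
    omega
  -- the finite set of level-ℓ vertices of R'
  set S := {r : List ℕ // r ∈ R'.verts ∧ r.length = ℓ} with hS
  haveI : Finite S := Set.Finite.to_subtype (hfin.subset (fun r hr => hr.1))
  -- choose representatives for φ'
  have hrep : ∀ r : S, ∃ v : L, (v.length ≤ n ∧ φ' v = r.1) ∧ v.length = ℓ := by
    rintro ⟨r, hr, hrl⟩
    obtain ⟨v, hv1, hv2⟩ := hφ3 r hr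
    refine ⟨v, ⟨hv1, hv2⟩, ?_⟩
    have := (hφ1 v hv1).2
    rw [hv2] at this
    omega
  choose vv hvv hvvl using hrep
  set g : S → S := fun r => ⟨ψ (vv r), (hψ1 (vv r) (hvv r).1).1, by
    rw [(hψ1 (vv r) (hvv r).1).2, hvvl r]⟩ with hg
  have hpsi_inv : ∀ (u z : L), u.length ≤ n → z.length ≤ n → φ' u = φ' z → ψ u = ψ z := by
    intro u z hu hz huz
    obtain ⟨g, hgA, hgz⟩ := (hφ2 u z hu hz).mp huz
    exact (hψ2 u z hu hz).mpr ⟨g, hle hgA, hgz⟩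
  have hgsurj : Function.Surjective g := by
    rintro ⟨s, hs, hsl⟩
    obtain ⟨z, hz1, hz2⟩ := hψ3 s hs
    have hzl : z.length = ℓ := by
      have := (hψ1 z hz1).2
      rw [hz2] at this
      omega
    have hmemS : φ' z ∈ R'.verts ∧ (φ' z).length = ℓ := ⟨(hφ1 z hz1).1, by
      rw [(hφ1 z hz1).2]; omega⟩
    refine ⟨⟨φ' z, hmemS⟩, Subtype.ext ?_⟩
    show ψ (vv ⟨φ' z, hmemS⟩) = s
    rw [← hz2]
    exact hpsi_inv _ z (hvv _).1 hz1 (hvv _).2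
  have hginj : Function.Injective g := Finite.injective_iff_surjective.mpr hgsurj
  -- now conclude
  have hrv : φ' v ∈ R'.verts ∧ (φ' v).length = ℓ := ⟨(hφ1 v hv).1, (hφ1 v hv).2⟩
  have hrw : φ' w ∈ R'.verts ∧ (φ' w).length = ℓ := ⟨(hφ1 w hw).1, by
    rw [(hφ1 w hw).2]; omega⟩
  set rv : S := ⟨φ' v, hrv⟩
  set rw' : S := ⟨φ' w, hrw⟩
  have hgv : (g rv).1 = ψ v := by
    show ψ (vv rv) = ψ v
    exact hpsi_inv (vv rv) v (hvv rv).1 hv (hvv rv).2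
  have hgw : (g rw').1 = ψ w := by
    show ψ (vv rw') = ψ w
    exact hpsi_inv (vv rw') w (hvv rw').1 hw (hvv rw').2
  have : g rv = g rw' := by
    refine Subtype.ext ?_
    rw [hgv, hgw, hvw]
  have := hginj this
  exact congrArg Subtype.val this

end Trees

/-! ### Stage 5b: solo-vertex counting and belongsTo for restrictions -/

section Trees2

variable {p : ℕ}

local notation "L" => List (ZMod p)
local notation "W" => wreath (ZMod p) (cyclic p)
local notation "Γ" => GammaLevel p

open Equiv

theorem childCount_root {n : ℕ} (R : RootedTree n) :
    childCount R [] = Nat.card {x : ℕ // [x] ∈ R.verts} := rfl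

theorem soloCount_eq_succ {n : ℕ} (R : RootedTree (n + 1)) (hfin : R.verts.Finite)
    (m : ℕ) (hm : [m] ∈ R.verts) (huniq : ∀ x : ℕ, [x] ∈ R.verts → x = m) :
    soloCount R = soloCount (subtree R m hm) + 1 := by
  have hccroot : childCount R [] = 1 := by
    rw [childCount_root]
    rw [Nat.card_eq_one_iff_unique]
    exact ⟨⟨fun a b => Subtype.ext (by rw [huniq _ a.2, huniq _ b.2])⟩, ⟨⟨m, hm⟩⟩⟩
  haveI hfin' : Finite {u : List ℕ // u ∈ (subtree R m hm).verts ∧ u.length < n ∧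
      childCount (subtree R m hm) u = 1} :=
    Set.Finite.to_subtype ((subtree_verts_finite hfin m hm).subset (fun u hu => hu.1))
  set F : Option {u : List ℕ // u ∈ (subtree R m hm).verts ∧ u.length < n ∧
      childCount (subtree R m hm) u = 1} →
      {v : List ℕ // v ∈ R.verts ∧ v.length < n + 1 ∧ childCount R v = 1} := fun o =>
    Option.elim o ⟨[], R.nil_mem, Nat.succ_pos n, hccroot⟩
      (fun u => ⟨m :: u.1, u.2.1, by
        have := u.2.2.1
        simpa using Nat.succ_lt_succ this, u.2.2.2⟩) with hF
  have hFbij : Function.Bijective F := by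
    constructor
    · intro o o' heq
      match o, o' with
      | none, none => rfl
      | none, some u =>
          exact absurd (congrArg Subtype.val heq) (by simp [hF])
      | some u, none =>
          exact absurd (congrArg Subtype.val heq) (by simp [hF])
      | some u, some u' =>
          have := congrArg Subtype.val heq
          simp only [hF, Option.elim] at this
          have h2 := (List.cons.injEq _ _ _ _ ▸ this).2
          rw [congrArg some (Subtype.ext h2)]
    · rintro ⟨v, hv1, hv2, hv3⟩
      match v with
      | [] => exact ⟨none, Subtype.ext rfl⟩
      | v0 :: u =>
          have hv0 : [v0] ∈ R.verts := R.prefix_closed (v0 :: u) hv1 [v0] ⟨u, rfl⟩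
          have hv0m := huniq v0 hv0
          subst hv0m
          exact ⟨some ⟨u, hv1, by simpa using hv2, hv3⟩, Subtype.ext rfl⟩
  have hcard := Nat.card_congr (Equiv.ofBijective F hFbij)
  rw [Finite.card_option] at hcard
  exact hcard.symm

theorem soloCount_eq_sum {n : ℕ} [NeZero p] (hp1 : p ≠ 1) (R : RootedTree (n + 1))
    (hfin : R.verts.Finite) (m : ZMod p → ℕ) (hminj : Function.Injective m)
    (hmem : ∀ i, [m i] ∈ R.verts) (hsurj : ∀ x : ℕ, [x] ∈ R.verts → ∃ i, m i = x) :
    soloCount R = ∑ i : ZMod p, soloCount (subtree R (m i) (hmem i)) := by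
  have hccroot : childCount R [] = p := by
    rw [childCount_root]
    have hbij : Function.Bijective (fun i : ZMod p => (⟨m i, hmem i⟩ :
        {x : ℕ // [x] ∈ R.verts})) := by
      constructor
      · intro i j hij
        exact hminj (congrArg Subtype.val hij)
      · rintro ⟨x, hx⟩
        obtain ⟨i, hi⟩ := hsurj x hx
        exact ⟨i, Subtype.ext hi⟩
    rw [← Nat.card_congr (Equiv.ofBijective _ hbij), Nat.card_zmod]
  haveI hfin' : ∀ i : ZMod p, Finite {u : List ℕ // u ∈ (subtree R (m i) (hmem i)).verts ∧
      u.length < n ∧ childCount (subtree R (m i) (hmem i)) u = 1} := fun i =>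
    Set.Finite.to_subtype ((subtree_verts_finite hfin (m i) (hmem i)).subset
      (fun u hu => hu.1))
  set F : (Σ i : ZMod p, {u : List ℕ // u ∈ (subtree R (m i) (hmem i)).verts ∧
      u.length < n ∧ childCount (subtree R (m i) (hmem i)) u = 1}) →
      {v : List ℕ // v ∈ R.verts ∧ v.length < n + 1 ∧ childCount R v = 1} := fun x =>
    ⟨m x.1 :: x.2.1, x.2.2.1, by
      have := x.2.2.2.1
      simpa using Nat.succ_lt_succ this, x.2.2.2.2⟩ with hF
  have hFbij : Function.Bijective F := by
    constructor
    · rintro ⟨i, u, hu⟩ ⟨j, u', hu'⟩ heq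
      have h1 := congrArg Subtype.val heq
      simp only [hF] at h1
      have hheads := (List.cons.injEq _ _ _ _ ▸ h1).1
      have hij : i = j := hminj hheads
      subst hij
      have htails := (List.cons.injEq _ _ _ _ ▸ h1).2
      exact congrArg (Sigma.mk i) (Subtype.ext htails)
    · rintro ⟨v, hv1, hv2, hv3⟩
      match v with
      | [] =>
          exfalso
          rw [hccroot] at hv3
          exact hp1 hv3
      | v0 :: u =>
          have hv0 : [v0] ∈ R.verts := R.prefix_closed (v0 :: u) hv1 [v0] ⟨u, rfl⟩
          obtain ⟨i, hi⟩ := hsurj v0 hv0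
          subst hi
          exact ⟨⟨i, ⟨u, hv1, by simpa using hv2, hv3⟩⟩, Subtype.ext rfl⟩
  have hcard := Nat.card_congr (Equiv.ofBijective F hFbij)
  haveI : ∀ i : ZMod p, Fintype {u : List ℕ // u ∈ (subtree R (m i) (hmem i)).verts ∧
      u.length < n ∧ childCount (subtree R (m i) (hmem i)) u = 1} := fun i =>
    Fintype.ofFinite _
  rw [Nat.card_eq_fintype_card, Fintype.card_sigma] at hcard
  unfold soloCount
  rw [← hcard]
  refine Finset.sum_congr rfl fun i _ => ?_
  rw [Nat.card_eq_fintype_card]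

/-- belongsTo for the restriction of `A` to a subtree. -/
theorem belongs_resSub {n : ℕ} {A : Subgroup (Perm L)} (hA : A ≤ Γ (n + 1))
    {R : RootedTree (n + 1)} (φ : L → List ℕ)
    (hφ1 : ∀ v : L, v.length ≤ n + 1 → φ v ∈ R.verts ∧ (φ v).length = v.length)
    (hφ2 : ∀ v w : L, v.length ≤ n + 1 → w.length ≤ n + 1 →
      (φ v = φ w ↔ ∃ g ∈ A, g v = w))
    (hφ3 : ∀ r ∈ R.verts, ∃ v : L, v.length ≤ n + 1 ∧ φ v = r)
    (hφ4 : ∀ v : L, v.length < n + 1 → ∀ x : ZMod p, φ v <+: φ (v ++ [x]))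
    (m : ZMod p → ℕ) (hm : ∀ i : ZMod p, φ [i] = [m i]) (i : ZMod p)
    (hmem : [m i] ∈ R.verts)
    (htrans : ∀ u0 : ZMod p, m u0 = m i → ∃ g ∈ A, g [u0] = [i]) :
    belongsTo p n (resSub A i) (subtree R (m i) hmem) := by
  have hAφ : ∀ g ∈ A, ∀ v : L, v.length ≤ n + 1 → φ (g v) = φ v := by
    intro g hg v hv
    exact ((hφ2 v (g v) hv (by
      rw [length_apply_of_mem_wreath (hA hg).1]; exact hv)).mpr ⟨g, hg, rfl⟩).symm
  have hφcons : ∀ (j : ZMod p) (v : L), v.length ≤ n →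
      φ (j :: v) = m j :: (φ (j :: v)).tail := by
    intro j v hv
    have hpre : φ [j] <+: φ ([j] ++ v) := phi_prefix φ hφ4 [j] v (by simpa using hv)
    rw [hm j] at hpre
    obtain ⟨t, ht⟩ := hpre
    have ht' : φ (j :: v) = m j :: t := ht.symm
    rw [ht']
    rfl
  have hlentail : ∀ (j : ZMod p) (v : L), v.length ≤ n →
      ((φ (j :: v)).tail).length = v.length := by
    intro j v hv
    have := (hφ1 (j :: v) (by simpa using hv)).2
    rw [List.length_tail, this]
    rfl
  refine ⟨fun v => (φ (i :: v)).tail, ?_, ?_, ?_, ?_⟩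
  · intro v hv
    constructor
    · show m i :: (φ (i :: v)).tail ∈ R.verts
      rw [← hφcons i v hv]
      exact (hφ1 (i :: v) (by simpa using hv)).1
    · exact hlentail i v hv
  · intro v w hv hw
    constructor
    · intro heq
      have heq' : (φ (i :: v)).tail = (φ (i :: w)).tail := heq
      have heq2 : φ (i :: v) = φ (i :: w) := by
        rw [hφcons i v hv, hφcons i w hw, heq']
      obtain ⟨g, hgA, hgvw⟩ := (hφ2 (i :: v) (i :: w) (by simpa using hv)
        (by simpa using hw)).mp heq2
      have hgW : g ∈ W := (hA hgA).1
      have hcons := apply_cons hgW i v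
      rw [hgvw] at hcons
      have hhead : i = i + rt g := (List.cons.injEq _ _ _ _ ▸ hcons).1
      have hrt : rt g = 0 := (left_eq_add.mp hhead)
      refine ⟨resPerm g i, ⟨g, ⟨hgA, hgW, fix_of_rt_zero hgW hrt i⟩, rfl⟩, ?_⟩
      rw [resPerm_apply hgW]
      exact ((List.cons.injEq _ _ _ _ ▸ hcons).2).symm
    · rintro ⟨h', ⟨g, ⟨hgA, hgW, hgfix⟩, rfl⟩, heq⟩
      have hrt : rt g = 0 := rt_eq_zero_of_fix hgW hgfix
      have hcons : g (i :: v) = i :: w := by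
        rw [apply_cons hgW, hrt, add_zero, ← resPerm_apply hgW, heq]
      have := hAφ g hgA (i :: v) (by simpa using hv)
      rw [hcons] at this
      rw [hφcons i v hv, hφcons i w hw] at this
      exact ((List.cons.injEq _ _ _ _ ▸ this).2).symm
  · intro r hr
    have hmr : [m i] ++ r ∈ R.verts := hr
    obtain ⟨u, hu1, hu2⟩ := hφ3 (m i :: r) hr
    have hulen : u.length = r.length + 1 := by
      have := (hφ1 u hu1).2
      rw [hu2] at this
      simpa using this.symm
    match u with
    | [] => simp at hulen
    | u0 :: u' =>
        have hu'len : u'.length ≤ n := by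
          have := (hφ1 (u0 :: u') hu1).2
          simp at hu1
          omega
        have hmu0 : m u0 = m i := by
          have := hφcons u0 u' hu'len
          rw [hu2] at this
          exact ((List.cons.injEq _ _ _ _ ▸ this).1).symm
        obtain ⟨g, hgA, hgu0⟩ := htrans u0 hmu0
        have hgW : g ∈ W := (hA hgA).1
        have hheadg : u0 + rt g = i := by
          have := apply_singleton hgW u0
          rw [hgu0] at this
          exact ((List.cons.injEq _ _ _ _ ▸ this).1).symm
        have hcons : g (u0 :: u') = i :: resFun g u0 u' := by
          rw [apply_cons hgW, hheadg]
        refine ⟨resFun g u0 u', ?_, ?_⟩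
        · have := length_apply_of_mem_wreath hgW (u0 :: u')
          rw [hcons] at this
          simp at this
          omega
        · have hinv := hAφ g hgA (u0 :: u') (by simp; omega)
          rw [hcons] at hinv
          have hres : (resFun g u0 u').length ≤ n := by
            have := length_apply_of_mem_wreath hgW (u0 :: u')
            rw [hcons] at this
            simp at this
            omega
          rw [hφcons i _ hres] at hinv
          rw [hu2] at hinv
          exact ((List.cons.injEq _ _ _ _ ▸ hinv).2)
  · intro v hv x
    have h1 := hφ4 (i :: v) (by simpa using hv) x
    rw [show ((i :: v) ++ [x] : L) = i :: (v ++ [x]) from rfl] at h1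
    rw [hφcons i v (le_of_lt hv), hφcons i (v ++ [x]) (by simpa using hv)] at h1
    exact (List.cons_prefix_cons.mp h1).2

end Trees2

/-! ### Stage 6: the main induction -/

section Main

variable {p : ℕ}

local notation "L" => List (ZMod p)
local notation "W" => wreath (ZMod p) (cyclic p)
local notation "Γ" => GammaLevel p

open Equiv

theorem key (hp : p.Prime) :
    ∀ (n : ℕ) (R : RootedTree n), Is1pTree p R →
      ∀ (A : Subgroup (Perm (List (ZMod p)))), A ≤ GammaLevel p n →
      (∀ a ∈ A, ∀ b ∈ A, a * b = b * a) → belongsTo p n A R →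
      Nat.card A ≤ p ^ soloCount R ∧
      ∃ B : Subgroup (Perm (List (ZMod p))), A ≤ B ∧ B ≤ GammaLevel p n ∧
        (∀ a ∈ B, ∀ b ∈ B, a * b = b * a) ∧ belongsTo p n B R ∧
        Nat.card B = p ^ soloCount R := by
  intro n
  induction n with
  | zero =>
      intro R hR A hA hab hbel
      have hbot : A = ⊥ := by
        rw [Subgroup.eq_bot_iff_forall]
        intro x hx
        exact gamma_zero_eq_bot (hA hx)
      have hsolo : soloCount R = 0 := by
        unfold soloCount
        haveI : IsEmpty {v : List ℕ // v ∈ R.verts ∧ v.length < 0 ∧ childCount R v = 1} :=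
          ⟨fun v => absurd v.2.2.1 (by omega)⟩
        exact Nat.card_of_isEmpty
      subst hbot
      refine ⟨?_, ⊥, le_refl _, hA, hab, hbel, ?_⟩
      · rw [hsolo, pow_zero, Subgroup.card_bot]
      · rw [hsolo, pow_zero, Subgroup.card_bot]
  | succ n IH =>
      intro R hR A hA hab hbel
      haveI : Fact p.Prime := ⟨hp⟩
      haveI : NeZero p := ⟨hp.ne_zero⟩
      obtain ⟨φ, hφ1, hφ2, hφ3, hφ4⟩ := hbel
      have hAφ : ∀ g ∈ A, ∀ v : L, v.length ≤ n + 1 → φ (g v) = φ v := fun g hg v hv =>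
        ((hφ2 v (g v) hv (by
          rw [length_apply_of_mem_wreath (hA hg).1]; exact hv)).mpr ⟨g, hg, rfl⟩).symm
      have hfinverts : R.verts.Finite := by
        have h1 : {v : L | v.length ≤ n + 1}.Finite := List.finite_length_le (ZMod p) (n + 1)
        refine (h1.image φ).subset ?_
        intro r hr
        obtain ⟨v, hv1, hv2⟩ := hφ3 r hr
        exact ⟨v, hv1, hv2⟩
      have hmex : ∀ i : ZMod p, ∃ mi : ℕ, φ [i] = [mi] := by
        intro i
        have h2 := (hφ1 [i] (by simp)).2
        exact List.length_eq_one_iff.mp (by simpa using h2)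
      choose m hm using hmex
      have hmmem : ∀ i : ZMod p, [m i] ∈ R.verts := fun i => hm i ▸ (hφ1 [i] (by simp)).1
      have hφcons : ∀ (j : ZMod p) (v : L), v.length ≤ n →
          φ (j :: v) = m j :: (φ (j :: v)).tail := by
        intro j v hv
        have hpre : φ [j] <+: φ ([j] ++ v) := phi_prefix φ hφ4 [j] v (by simpa using hv)
        rw [hm j] at hpre
        obtain ⟨t, ht⟩ := hpre
        have ht' : φ (j :: v) = m j :: t := ht.symm
        rw [ht']
        rfl
      by_cases hcase : ∃ a ∈ A, rt a ≠ 0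
      · -- solo branch
        obtain ⟨a, haA, hc⟩ := hcase
        have haW : a ∈ W := (hA haA).1
        have htrans0 : ∀ u0 : ZMod p, ∃ g ∈ A, g [u0] = [(0 : ZMod p)] := by
          intro u0
          refine ⟨a ^ expo a (-u0), pow_mem haA _, ?_⟩
          rw [apply_singleton (pow_mem haW _), rt_pow_expo haW hc]
          norm_num
        have hallm : ∀ i : ZMod p, m i = m 0 := by
          intro i
          obtain ⟨g, hg, hgi⟩ := htrans0 i
          have h3 := hAφ g hg [i] (by simp)
          rw [hgi, hm i, hm 0] at h3
          exact ((List.cons.injEq _ _ _ _ ▸ h3).1).symm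
        have huniq : ∀ x : ℕ, [x] ∈ R.verts → x = m 0 := by
          intro x hx
          obtain ⟨v, hv1, hv2⟩ := hφ3 [x] hx
          have hlen1 : v.length = 1 := by
            have h4 := (hφ1 v hv1).2
            rw [hv2] at h4
            simpa using h4.symm
          obtain ⟨i, hi⟩ := List.length_eq_one_iff.mp hlen1
          subst hi
          rw [hm i] at hv2
          have h5 := (List.cons.injEq _ _ _ _ ▸ hv2).1
          rw [← h5, hallm i]
        have hsolo : soloCount R = soloCount (subtree R (m 0) (hmmem 0)) + 1 :=
          soloCount_eq_succ R hfinverts (m 0) (hmmem 0) huniq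
        have hR' : Is1pTree p (subtree R (m 0) (hmmem 0)) := is1p_subtree hR _ _
        have hbel' : belongsTo p n (resSub A 0) (subtree R (m 0) (hmmem 0)) :=
          belongs_resSub hA φ hφ1 hφ2 hφ3 hφ4 m hm 0 (hmmem 0) (fun u0 _ => htrans0 u0)
        obtain ⟨hcard', B', hAB', hB'Γ, hB'ab, hbelB', hcardB'⟩ :=
          IH (subtree R (m 0) (hmmem 0)) hR' (resSub A 0)
            (resSub_le_gamma hA 0) (resSub_comm hab 0) hbel'
        have hcount : Nat.card A = p * Nat.card (resSub A 0) := solo_count hA hab haA hc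
        have hineq : Nat.card A ≤ p ^ soloCount R := by
          rw [hcount, hsolo, pow_succ, mul_comm (p ^ soloCount (subtree R (m 0) (hmmem 0))) p]
          exact Nat.mul_le_mul_left p hcard'
        have hsub : ∀ g ∈ A, rt g = 0 → resPerm g 0 ∈ B' := fun g hg h0 =>
          hAB' ⟨g, ⟨hg, (hA hg).1, fix_of_rt_zero (hA hg).1 h0 0⟩, rfl⟩
        obtain ⟨ψ, hψ1, hψ2, hψ3, hψ4⟩ := hbelB'
        obtain ⟨φA', hA'1, hA'2, hA'3, hA'4⟩ := hbel'
        have hφ'B : ∀ b ∈ B', ∀ u : L, u.length ≤ n →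
            φ ((0 : ZMod p) :: b u) = φ (0 :: u) := by
          intro b hb u hu
          have hbW : b ∈ W := (hB'Γ hb).1
          have hbu : (b u).length ≤ n := by
            rw [length_apply_of_mem_wreath hbW]; exact hu
          have hψeq : ψ u = ψ (b u) := (hψ2 u (b u) hu hbu).mpr ⟨b, hb, rfl⟩
          have hφA : φA' u = φA' (b u) :=
            fiber_refine hAB' (subtree_verts_finite hfinverts _ _) φA' ψ hA'1 hA'2 hA'3
              hψ1 hψ2 hψ3 u (b u) hu hbu hψeq
          obtain ⟨h, hhmem, hhu⟩ := (hA'2 u (b u) hu hbu).mp hφA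
          obtain ⟨g, ⟨hgA, hgW, hgf⟩, rfl⟩ := hhmem
          have hgrt : rt g = 0 := rt_eq_zero_of_fix hgW hgf
          have hcons : g ((0 : ZMod p) :: u) = 0 :: b u := by
            rw [apply_cons hgW, hgrt, add_zero, ← resPerm_apply hgW, hhu]
          have h6 := hAφ g hgA ((0 : ZMod p) :: u) (by simp; omega)
          rw [hcons] at h6
          exact h6
        obtain ⟨B, hABB, hBΓ, hBab, hBcard, hBφ⟩ :=
          solo_construction hA hab haA hc hB'Γ hB'ab hsub φ hAφ hφ'B
        refine ⟨hineq, B, hABB, hBΓ, hBab, ?_, ?_⟩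
        · refine ⟨φ, hφ1, ?_, hφ3, hφ4⟩
          intro v w hv hw
          constructor
          · intro heq
            obtain ⟨g, hg, hgvw⟩ := (hφ2 v w hv hw).mp heq
            exact ⟨g, hABB hg, hgvw⟩
          · rintro ⟨g, hg, rfl⟩
            exact (hBφ g hg v hv).symm
        · rw [hBcard, hcardB', hsolo, pow_succ]
          ring
      · -- fixing branch
        push_neg at hcase
        have htriv : ∀ g ∈ A, rt g = 0 := hcase
        have hminj : Function.Injective m := by
          intro i j hij
          have h7 : φ [i] = φ [j] := by rw [hm i, hm j, hij]
          obtain ⟨g, hg, hgij⟩ := (hφ2 [i] [j] (by simp) (by simp)).mp h7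
          rw [apply_singleton (hA hg).1, htriv g hg, add_zero] at hgij
          exact (List.cons.injEq _ _ _ _ ▸ hgij).1
        have hmsurj : ∀ x : ℕ, [x] ∈ R.verts → ∃ i, m i = x := by
          intro x hx
          obtain ⟨v, hv1, hv2⟩ := hφ3 [x] hx
          have hlen1 : v.length = 1 := by
            have h8 := (hφ1 v hv1).2
            rw [hv2] at h8
            simpa using h8.symm
          obtain ⟨i, hi⟩ := List.length_eq_one_iff.mp hlen1
          subst hi
          rw [hm i] at hv2
          exact ⟨i, (List.cons.injEq _ _ _ _ ▸ hv2).1⟩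
        have hsolo := soloCount_eq_sum hp.ne_one R hfinverts m hminj hmmem hmsurj
        have htrans : ∀ i : ZMod p, ∀ u0 : ZMod p, m u0 = m i → ∃ g ∈ A, g [u0] = [i] := by
          intro i u0 hmu
          have h9 := hminj hmu
          subst h9
          exact ⟨1, A.one_mem, rfl⟩
        have hbel' : ∀ i, belongsTo p n (resSub A i) (subtree R (m i) (hmmem i)) :=
          fun i => belongs_resSub hA φ hφ1 hφ2 hφ3 hφ4 m hm i (hmmem i) (htrans i)
        have hIH := fun i : ZMod p => IH (subtree R (m i) (hmmem i)) (is1p_subtree hR _ _)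
          (resSub A i) (resSub_le_gamma hA i) (resSub_comm hab i) (hbel' i)
        have hcard' : ∀ i, Nat.card (resSub A i) ≤ p ^ soloCount (subtree R (m i) (hmmem i)) :=
          fun i => (hIH i).1
        choose Bf hBf using fun i => (hIH i).2
        have hABf : ∀ i, resSub A i ≤ Bf i := fun i => (hBf i).1
        have hBfΓ : ∀ i, Bf i ≤ Γ n := fun i => (hBf i).2.1
        have hBfab : ∀ i, ∀ x ∈ Bf i, ∀ y ∈ Bf i, x * y = y * x := fun i => (hBf i).2.2.1
        have hbelBf : ∀ i, belongsTo p n (Bf i) (subtree R (m i) (hmmem i)) :=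
          fun i => (hBf i).2.2.2.1
        have hcardBf : ∀ i, Nat.card (Bf i) = p ^ soloCount (subtree R (m i) (hmmem i)) :=
          fun i => (hBf i).2.2.2.2
        haveI hfinsub : ∀ i : ZMod p, Finite (resSub A i) := fun i =>
          subgroup_finite_of_le_gamma hp.ne_zero (resSub_le_gamma hA i)
        have hinj : Function.Injective (fun (g : A) => (fun i =>
            (⟨resPerm g.1 i, ⟨g.1, ⟨g.2, (hA g.2).1,
              fix_of_rt_zero (hA g.2).1 (htriv g.1 g.2) i⟩, rfl⟩⟩ : resSub A i))) := by
          intro g h heq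
          have h10 : ∀ i, resPerm g.1 i = resPerm h.1 i := fun i =>
            congrArg Subtype.val (congrFun heq i)
          refine Subtype.ext ?_
          rw [eq_gluePerm_of_rt_zero (hA g.2).1 (htriv _ g.2),
            eq_gluePerm_of_rt_zero (hA h.2).1 (htriv _ h.2)]
          exact congrArg gluePerm (funext h10)
        have hineq : Nat.card A ≤ p ^ soloCount R := by
          calc Nat.card A ≤ Nat.card (∀ i : ZMod p, resSub A i) :=
                Nat.card_le_card_of_injective _ hinj
            _ = ∏ i, Nat.card (resSub A i) := Nat.card_pi
            _ ≤ ∏ i, p ^ soloCount (subtree R (m i) (hmmem i)) :=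
                Finset.prod_le_prod' (fun i _ => hcard' i)
            _ = p ^ ∑ i, soloCount (subtree R (m i) (hmmem i)) :=
                Finset.prod_pow_eq_pow_sum _ _ _
            _ = p ^ soloCount R := by rw [← hsolo]
        have hsub : ∀ g ∈ A, ∀ i, resPerm g i ∈ Bf i := fun g hg i =>
          hABf i ⟨g, ⟨hg, (hA hg).1, fix_of_rt_zero (hA hg).1 (htriv g hg) i⟩, rfl⟩
        have hφ'B : ∀ i : ZMod p, ∀ b ∈ Bf i, ∀ u : L, u.length ≤ n →
            φ (i :: b u) = φ (i :: u) := by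
          intro i b hb u hu
          obtain ⟨ψ, hψ1, hψ2, hψ3, hψ4⟩ := hbelBf i
          obtain ⟨φA', hA'1, hA'2, hA'3, hA'4⟩ := hbel' i
          have hbW : b ∈ W := (hBfΓ i hb).1
          have hbu : (b u).length ≤ n := by
            rw [length_apply_of_mem_wreath hbW]; exact hu
          have hψeq : ψ u = ψ (b u) := (hψ2 u (b u) hu hbu).mpr ⟨b, hb, rfl⟩
          have hφA : φA' u = φA' (b u) :=
            fiber_refine (hABf i) (subtree_verts_finite hfinverts _ _) φA' ψ hA'1 hA'2 hA'3
              hψ1 hψ2 hψ3 u (b u) hu hbu hψeq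
          obtain ⟨h, hhmem, hhu⟩ := (hA'2 u (b u) hu hbu).mp hφA
          obtain ⟨g, ⟨hgA, hgW, hgf⟩, rfl⟩ := hhmem
          have hgrt : rt g = 0 := rt_eq_zero_of_fix hgW hgf
          have hcons : g (i :: u) = i :: b u := by
            rw [apply_cons hgW, hgrt, add_zero, ← resPerm_apply hgW, hhu]
          have h11 := hAφ g hgA (i :: u) (by simp; omega)
          rw [hcons] at h11
          exact h11
        obtain ⟨B, hABB, hBΓ, hBab, hBcard, hBφ⟩ :=
          fixes_construction hA htriv Bf hBfΓ hBfab hsub φ hφ'B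
        refine ⟨hineq, B, hABB, hBΓ, hBab, ?_, ?_⟩
        · refine ⟨φ, hφ1, ?_, hφ3, hφ4⟩
          intro v w hv hw
          constructor
          · intro heq
            obtain ⟨g, hg, hgvw⟩ := (hφ2 v w hv hw).mp heq
            exact ⟨g, hABB hg, hgvw⟩
          · rintro ⟨g, hg, rfl⟩
            exact (hBφ g hg v hv).symm
        · rw [hBcard, hsolo]
          calc ∏ i, Nat.card (Bf i)
              = ∏ i, p ^ soloCount (subtree R (m i) (hmmem i)) := by
                refine Finset.prod_congr rfl fun i _ => hcardBf i
            _ = p ^ ∑ i, soloCount (subtree R (m i) (hmmem i)) :=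
                Finset.prod_pow_eq_pow_sum _ _ _

end Main

/-- **Abelian subgroups and orbit trees** (Lemma 8.1).
Let `R` be a `1-p` tree of depth `n` and let `A ⊆ Γ_n(p)` be an Abelian subgroup
which belongs to `R`.  Then `log_p |A| ≤ S(R)`, i.e. `|A| ≤ p^{S(R)}`, and
equality holds if and only if `A` is maximal among the Abelian subgroups of
`Γ_n(p)` belonging to `R`. -/
theorem abelian_orbit_tree (p n : ℕ) (hp : p.Prime) (R : RootedTree n)
    (hR : Is1pTree p R) (A : Subgroup (Equiv.Perm (List (ZMod p))))
    (hA : A ≤ GammaLevel p n) (hab : ∀ a ∈ A, ∀ b ∈ A, a * b = b * a)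
    (hbel : belongsTo p n A R) :
    Nat.card ↥A ≤ p ^ soloCount R ∧
      (Nat.card ↥A = p ^ soloCount R ↔
        ∀ B : Subgroup (Equiv.Perm (List (ZMod p))), B ≤ GammaLevel p n →
          (∀ a ∈ B, ∀ b ∈ B, a * b = b * a) → belongsTo p n B R → A ≤ B → B = A) := by
  obtain ⟨hineq, B₀, hAB₀, hB₀Γ, hB₀ab, hB₀bel, hB₀card⟩ :=
    key hp n R hR A hA hab hbel
  refine ⟨hineq, ?_, ?_⟩
  · intro hcardA B hBΓ hBab hBbel hAB
    have hBle := (key hp n R hR B hBΓ hBab hBbel).1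
    haveI : Finite B := subgroup_finite_of_le_gamma hp.ne_zero hBΓ
    exact (Subgroup.eq_of_le_of_card_ge hAB (by rw [hcardA]; exact hBle)).symm
  · intro hmax
    have h1 := hmax B₀ hB₀Γ hB₀ab hB₀bel hAB₀
    rw [← h1, hB₀card]


end TreeWreath
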